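/- Let G̃ be obtained by Construction 1 from (G, H, v_c), with adjacency matrix Ã, and let A be the adjacency matrix of G. Let λ be an eigenvalue of A such that the vector w := E_λ e_{v_c} is nonzero, where E_λ is the orthogonal projection onto the λ-eigenspace of A. Define w̃ ∈ ℝ^{V(G̃)} by w̃_{(v,1)} = w_v and w̃_{(v,2)} = −w_v for v ∈ V(G), and w̃_{v'} = 0 for v' ∈ V(H). Then w̃ ≠ 0 and Ã w̃ = λ w̃; in particular, λ is an eigenvalue of Ã. -/

import Mathlib

open SimpleGraph Matrix

/-- `v` and `w` lie in the same orbit under the automorphisms of `G` fixing `vc`. -/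
def SameOrbit {V : Type*} (G : SimpleGraph V) (vc v w : V) : Prop :=
  ∃ φ : G ≃g G, φ vc = vc ∧ φ v = w

/-- `Gt` is obtained from `(G, H, vc)` by Construction 1. -/
def IsConstruction1 {V W : Type*} (G : SimpleGraph V) (H : SimpleGraph W)
    (vc : V) (Gt : SimpleGraph (V × Fin 2 ⊕ W)) : Prop :=
  (∀ i : Fin 2, ∀ v w : V, Gt.Adj (Sum.inl (v, i)) (Sum.inl (w, i)) ↔ G.Adj v w) ∧
  (∀ v w : V, ¬ Gt.Adj (Sum.inl (v, 0)) (Sum.inl (w, 1))) ∧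
  (∀ v w : W, Gt.Adj (Sum.inr v) (Sum.inr w) ↔ H.Adj v w) ∧
  (∀ w : W, ∀ u : V,
    Nat.card {v : V // SameOrbit G vc u v ∧ Gt.Adj (Sum.inl (v, 0)) (Sum.inr w)} =
    Nat.card {v : V // SameOrbit G vc u v ∧ Gt.Adj (Sum.inl (v, 1)) (Sum.inr w)})

/-- `P` is the orthogonal projection of `ℝ^α` onto the `lam`-eigenspace of `A`. -/
def IsEigProjection {α : Type*} [Fintype α] (A : Matrix α α ℝ) (lam : ℝ)
    (P : Matrix α α ℝ) : Prop :=
  P.IsSymm ∧ P * P = P ∧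
  (∀ x : α → ℝ, A *ᵥ (P *ᵥ x) = lam • (P *ᵥ x)) ∧
  (∀ x : α → ℝ, A *ᵥ x = lam • x → P *ᵥ x = x)



lemma dot_comp_equiv {V : Type*} [Fintype V] (e : Equiv.Perm V) (a b : V → ℝ) :
    (a ∘ e) ⬝ᵥ (b ∘ e) = a ⬝ᵥ b := by
  simpa [dotProduct] using
    Fintype.sum_equiv e (fun u => a (e u) * b (e u)) (fun u => a u * b u) (fun u => rfl)

lemma adj_mulVec_comp {V : Type*} [Fintype V] [DecidableEq V] (G : SimpleGraph V)
    [DecidableRel G.Adj] (φ : G ≃g G) (x : V → ℝ) :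
    G.adjMatrix ℝ *ᵥ (x ∘ φ) = (G.adjMatrix ℝ *ᵥ x) ∘ φ := by
  funext v
  simp only [mulVec, dotProduct, Function.comp]
  exact Fintype.sum_equiv φ.toEquiv (fun u => G.adjMatrix ℝ v u * x (φ u))
    (fun u => G.adjMatrix ℝ (φ v) u * x u)
    (fun u => by simp [adjMatrix_apply, φ.map_adj_iff])

lemma proj_comp {V : Type*} [Fintype V] [DecidableEq V] (G : SimpleGraph V)
    [DecidableRel G.Adj] (lam : ℝ) (P : Matrix V V ℝ)
    (hP : IsEigProjection (G.adjMatrix ℝ) lam P) (φ : G ≃g G) (x : V → ℝ) :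
    P *ᵥ (x ∘ φ) = (P *ᵥ x) ∘ φ := by
  set A := G.adjMatrix ℝ with hA
  have hsym : ∀ a b : V → ℝ, (P *ᵥ a) ⬝ᵥ b = a ⬝ᵥ (P *ᵥ b) := by
    intro a b
    rw [Matrix.dotProduct_mulVec, ← Matrix.mulVec_transpose, hP.1]
  have horth : ∀ a u : V → ℝ, A *ᵥ u = lam • u → (a - P *ᵥ a) ⬝ᵥ u = 0 := by
    intro a u hu
    rw [sub_dotProduct, hsym, hP.2.2.2 u hu, sub_self]
  set y := P *ᵥ (x ∘ φ) with hy
  set z := (P *ᵥ x) ∘ φ with hz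
  have hey : A *ᵥ y = lam • y := hP.2.2.1 _
  have hez : A *ᵥ z = lam • z := by
    rw [hz, adj_mulVec_comp G φ, hP.2.2.1]
    rfl
  have hd : A *ᵥ (y - z) = lam • (y - z) := by
    rw [Matrix.mulVec_sub, hey, hez, smul_sub]
  have h1 : (x ∘ φ - y) ⬝ᵥ (y - z) = 0 := horth _ _ hd
  have h2 : (x ∘ φ - z) ⬝ᵥ (y - z) = 0 := by
    have he : x ∘ φ - z = (x - P *ᵥ x) ∘ φ := by
      funext v; simp [hz, Function.comp]
    have hu : A *ᵥ ((y - z) ∘ φ.symm) = lam • ((y - z) ∘ φ.symm) := by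
      rw [adj_mulVec_comp G φ.symm, hd]; rfl
    have h3 := horth x ((y - z) ∘ φ.symm) hu
    have h4 : ((y - z) ∘ φ.symm) ∘ φ = y - z := by
      funext v; simp
    calc (x ∘ φ - z) ⬝ᵥ (y - z) = ((x - P *ᵥ x) ∘ φ) ⬝ᵥ (((y - z) ∘ φ.symm) ∘ φ) := by
          rw [he, h4]
      _ = (x - P *ᵥ x) ⬝ᵥ ((y - z) ∘ φ.symm) := dot_comp_equiv φ.toEquiv _ _
      _ = 0 := h3
  have h5 : (y - z) ⬝ᵥ (y - z) = 0 := by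
    have : (y - z) ⬝ᵥ (y - z) = (x ∘ φ - z) ⬝ᵥ (y - z) - (x ∘ φ - y) ⬝ᵥ (y - z) := by
      rw [← sub_dotProduct]; congr 1; abel
    rw [this, h1, h2, sub_zero]
  exact sub_eq_zero.mp (dotProduct_self_eq_zero.mp h5)

lemma sameOrbit_refl {V : Type*} (G : SimpleGraph V) (vc a : V) : SameOrbit G vc a a :=
  ⟨RelIso.refl _, rfl, rfl⟩

lemma sameOrbit_symm {V : Type*} {G : SimpleGraph V} {vc a b : V}
    (h : SameOrbit G vc a b) : SameOrbit G vc b a := by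
  obtain ⟨φ, hc, hab⟩ := h
  refine ⟨φ.symm, ?_, ?_⟩
  · have := congrArg φ.symm hc; simpa using this.symm
  · have := congrArg φ.symm hab; simpa using this.symm

lemma sameOrbit_trans {V : Type*} {G : SimpleGraph V} {vc a b c : V}
    (h1 : SameOrbit G vc a b) (h2 : SameOrbit G vc b c) : SameOrbit G vc a c := by
  obtain ⟨φ, hc1, h1⟩ := h1
  obtain ⟨ψ, hc2, h2⟩ := h2
  exact ⟨φ.trans ψ, by simp [RelIso.trans_apply, hc1, hc2], by simp [RelIso.trans_apply, h1, h2]⟩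

lemma sum_ite_orbit {V : Type*} [Fintype V] (G : SimpleGraph V) (vc : V) (w : V → ℝ)
    (hconst : ∀ u v, SameOrbit G vc u v → w u = w v)
    (p q : V → Prop) [DecidablePred p] [DecidablePred q]
    (hcard : ∀ u, Nat.card {v // SameOrbit G vc u v ∧ p v} =
      Nat.card {v // SameOrbit G vc u v ∧ q v}) :
    (∑ u, if p u then w u else 0) = ∑ u, if q u then w u else 0 := by
  classical
  let s : Setoid V := ⟨fun a b => SameOrbit G vc a b,
    ⟨fun a => sameOrbit_refl G vc a, sameOrbit_symm, sameOrbit_trans⟩⟩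
  have hmem : ∀ (j : Quotient s) (u : V), Quotient.mk s u = j ↔ SameOrbit G vc j.out u := by
    intro j u
    constructor
    · intro h
      exact sameOrbit_symm (Quotient.eq.mp (h.trans j.out_eq.symm))
    · intro h
      exact (Quotient.eq.mpr (sameOrbit_symm h)).trans j.out_eq
  have key : ∀ (p : V → Prop) [DecidablePred p], (∑ u, if p u then w u else 0)
      = ∑ j : Quotient s, w j.out * (Nat.card {v // SameOrbit G vc j.out v ∧ p v} : ℝ) := by
    intro p hp
    rw [← Finset.sum_fiberwise Finset.univ (Quotient.mk s) (fun u => if p u then w u else 0)]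
    refine Finset.sum_congr rfl fun j _ => ?_
    have hcardeq : Nat.card {v // SameOrbit G vc j.out v ∧ p v}
        = ((Finset.univ.filter (fun u => Quotient.mk s u = j)).filter p).card := by
      rw [Nat.card_eq_fintype_card, Fintype.card_subtype, Finset.filter_filter]
      congr 1
      ext u
      simp [hmem j u]
    calc (∑ u ∈ Finset.univ.filter (fun u => Quotient.mk s u = j), if p u then w u else 0)
        = ∑ u ∈ Finset.univ.filter (fun u => Quotient.mk s u = j), if p u then w j.out else 0 := by
          refine Finset.sum_congr rfl fun u hu => ?_
          have h := hconst j.out u ((hmem j u).1 (Finset.mem_filter.1 hu).2)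
          by_cases hp : p u <;> simp [hp, h]
      _ = w j.out * ((Finset.univ.filter (fun u => Quotient.mk s u = j)).filter p).card := by
          rw [← Finset.sum_filter, Finset.sum_const, nsmul_eq_mul, mul_comm]
      _ = w j.out * (Nat.card {v // SameOrbit G vc j.out v ∧ p v} : ℝ) := by
          rw [hcardeq]
  rw [key p, key q]
  exact Finset.sum_congr rfl fun j _ => by rw [hcard j.out]

/-- An eigenvalue `lam` of `A(G)` whose eigenprojection does not annihilate `e_{v_c}`
lifts to an eigenvalue of the adjacency matrix of the graph obtained by Construction 1,
with eigenvector equal to `E_lam e_{v_c}` on the first copy of `G`, its negative on the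
second copy, and zero on `H`. -/
theorem induced_eigenvalue_of_construction1 {V W : Type*} [Fintype V] [Fintype W]
    [DecidableEq V] [DecidableEq W]
    (G : SimpleGraph V) [DecidableRel G.Adj] (H : SimpleGraph W) (vc : V)
    (Gt : SimpleGraph (V × Fin 2 ⊕ W)) [DecidableRel Gt.Adj]
    (hC : IsConstruction1 G H vc Gt)
    (lam : ℝ) (hlam : ∃ x : V → ℝ, x ≠ 0 ∧ G.adjMatrix ℝ *ᵥ x = lam • x)
    (P : Matrix V V ℝ) (hP : IsEigProjection (G.adjMatrix ℝ) lam P)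
    (w : V → ℝ) (hw : w = P *ᵥ Pi.single vc 1) (hw0 : w ≠ 0)
    (wt : V × Fin 2 ⊕ W → ℝ)
    (hwt1 : ∀ v : V, wt (Sum.inl (v, 0)) = w v)
    (hwt2 : ∀ v : V, wt (Sum.inl (v, 1)) = -w v)
    (hwt3 : ∀ v' : W, wt (Sum.inr v') = 0) :
    wt ≠ 0 ∧ Gt.adjMatrix ℝ *ᵥ wt = lam • wt ∧
      (∃ x : V × Fin 2 ⊕ W → ℝ, x ≠ 0 ∧ Gt.adjMatrix ℝ *ᵥ x = lam • x) := by
  classical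
  obtain ⟨hAdj, hCross, hH, hCount⟩ := hC
  have hconst : ∀ u v, SameOrbit G vc u v → w u = w v := by
    rintro u v ⟨φ, hc, huv⟩
    have hsingle : (Pi.single vc (1:ℝ)) ∘ φ = Pi.single vc 1 := by
      funext a
      by_cases h : a = vc
      · subst h; rw [Function.comp_apply, hc]
      · have hne : φ a ≠ vc := fun he => h (φ.injective (he.trans hc.symm))
        simp [Function.comp, Pi.single_eq_of_ne, h, hne]
    have h2 := proj_comp G lam P hP φ (Pi.single vc 1)
    rw [hsingle] at h2
    have h3 : w = w ∘ φ := by rw [hw]; exact h2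
    calc w u = (w ∘ φ) u := by rw [← h3]
      _ = w (φ u) := rfl
      _ = w v := by rw [huv]
  have heig : G.adjMatrix ℝ *ᵥ w = lam • w := by rw [hw]; exact hP.2.2.1 _
  obtain ⟨v0, hv0⟩ : ∃ v, w v ≠ 0 := by
    by_contra h; push_neg at h; exact hw0 (funext h)
  have hwtne : wt ≠ 0 := by
    intro h
    apply hv0
    rw [← hwt1 v0, h]; rfl
  have hmv : Gt.adjMatrix ℝ *ᵥ wt = lam • wt := by
    funext sv
    have expand : (Gt.adjMatrix ℝ *ᵥ wt) sv = ∑ t, (if Gt.Adj sv t then wt t else 0) := by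
      simp [mulVec, dotProduct, adjMatrix_apply, ite_mul]
    have hinr0 : ∀ s : V × Fin 2 ⊕ W,
        (∑ b : W, if Gt.Adj s (Sum.inr b) then wt (Sum.inr b) else 0) = 0 := by
      intro s; simp [hwt3]
    rcases sv with ⟨v, i⟩ | v'
    · fin_cases i
      · rw [expand, Fintype.sum_sum_type, hinr0, add_zero, Fintype.sum_prod_type]
        simp only [Fin.sum_univ_two]
        have hterm : ∀ u : V,
            ((if Gt.Adj (Sum.inl (v, 0)) (Sum.inl (u, 0)) then wt (Sum.inl (u, 0)) else 0)
            + (if Gt.Adj (Sum.inl (v, 0)) (Sum.inl (u, 1)) then wt (Sum.inl (u, 1)) else 0))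
            = if G.Adj v u then w u else 0 := by
          intro u
          rw [if_neg (hCross v u), add_zero, hwt1]
          simp [hAdj 0 v u]
        calc (∑ u : V,
              ((if Gt.Adj (Sum.inl (v, 0)) (Sum.inl (u, 0)) then wt (Sum.inl (u, 0)) else 0)
              + (if Gt.Adj (Sum.inl (v, 0)) (Sum.inl (u, 1)) then wt (Sum.inl (u, 1)) else 0)))
            = ∑ u : V, if G.Adj v u then w u else 0 :=
              Finset.sum_congr rfl fun u _ => hterm u
          _ = (G.adjMatrix ℝ *ᵥ w) v := by
              simp [mulVec, dotProduct, adjMatrix_apply, ite_mul]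
          _ = lam * w v := by rw [heig]; rfl
          _ = (lam • wt) (Sum.inl (v, 0)) := by rw [Pi.smul_apply, hwt1]; rfl
      · rw [expand, Fintype.sum_sum_type, hinr0, add_zero, Fintype.sum_prod_type]
        simp only [Fin.sum_univ_two]
        have hterm : ∀ u : V,
            ((if Gt.Adj (Sum.inl (v, 1)) (Sum.inl (u, 0)) then wt (Sum.inl (u, 0)) else 0)
            + (if Gt.Adj (Sum.inl (v, 1)) (Sum.inl (u, 1)) then wt (Sum.inl (u, 1)) else 0))
            = -(if G.Adj v u then w u else 0) := by
          intro u
          rw [if_neg (fun h => hCross u v h.symm), zero_add, hwt2]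
          by_cases h : G.Adj v u <;> simp [hAdj 1 v u, h]
        calc (∑ u : V,
              ((if Gt.Adj (Sum.inl (v, 1)) (Sum.inl (u, 0)) then wt (Sum.inl (u, 0)) else 0)
              + (if Gt.Adj (Sum.inl (v, 1)) (Sum.inl (u, 1)) then wt (Sum.inl (u, 1)) else 0)))
            = ∑ u : V, -(if G.Adj v u then w u else 0) :=
              Finset.sum_congr rfl fun u _ => hterm u
          _ = -((G.adjMatrix ℝ *ᵥ w) v) := by
              rw [Finset.sum_neg_distrib]
              congr 1
              simp [mulVec, dotProduct, adjMatrix_apply, ite_mul]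
          _ = lam * (-(w v)) := by rw [heig]; simp [mul_comm]
          _ = (lam • wt) (Sum.inl (v, 1)) := by rw [Pi.smul_apply, hwt2]; rfl
    · rw [expand, Fintype.sum_sum_type, hinr0, add_zero, Fintype.sum_prod_type]
      simp only [Fin.sum_univ_two]
      have hkey := sum_ite_orbit G vc w hconst
        (fun u => Gt.Adj (Sum.inl (u, 0)) (Sum.inr v'))
        (fun u => Gt.Adj (Sum.inl (u, 1)) (Sum.inr v'))
        (fun u => hCount v' u)
      have hterm : ∀ u : V,
          ((if Gt.Adj (Sum.inr v') (Sum.inl (u, 0)) then wt (Sum.inl (u, 0)) else 0)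
          + (if Gt.Adj (Sum.inr v') (Sum.inl (u, 1)) then wt (Sum.inl (u, 1)) else 0))
          = (if Gt.Adj (Sum.inl (u, 0)) (Sum.inr v') then w u else 0)
            - (if Gt.Adj (Sum.inl (u, 1)) (Sum.inr v') then w u else 0) := by
        intro u
        rw [hwt1, hwt2]
        by_cases h1 : Gt.Adj (Sum.inl (u, 0)) (Sum.inr v') <;>
          by_cases h2 : Gt.Adj (Sum.inl (u, 1)) (Sum.inr v') <;>
          simp [h1, h2, Gt.adj_comm, sub_eq_add_neg]
      calc (∑ u : V,
            ((if Gt.Adj (Sum.inr v') (Sum.inl (u, 0)) then wt (Sum.inl (u, 0)) else 0)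
            + (if Gt.Adj (Sum.inr v') (Sum.inl (u, 1)) then wt (Sum.inl (u, 1)) else 0)))
          = ∑ u : V, ((if Gt.Adj (Sum.inl (u, 0)) (Sum.inr v') then w u else 0)
            - (if Gt.Adj (Sum.inl (u, 1)) (Sum.inr v') then w u else 0)) :=
            Finset.sum_congr rfl fun u _ => hterm u
        _ = (∑ u : V, if Gt.Adj (Sum.inl (u, 0)) (Sum.inr v') then w u else 0)
            - ∑ u : V, if Gt.Adj (Sum.inl (u, 1)) (Sum.inr v') then w u else 0 :=
            Finset.sum_sub_distrib _ _
        _ = 0 := by rw [hkey, sub_self]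
        _ = (lam • wt) (Sum.inr v') := by rw [Pi.smul_apply, hwt3]; simp
  exact ⟨hwtne, hmv, wt, hwtne, hmv⟩
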